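/- arXiv:1308.1312 — 2 statements merged into one kernel-verified Lean document; each statement's English description precedes it below -/
import Mathlib

section
/- Let f : ℝⁿ → ℝ be smooth and ℤⁿ-periodic (f(x + v) = f(x) for all v ∈ ℤⁿ), and let p, q be natural numbers with p, q ≥ 1 and p + q ≥ 2. Then ∫_{[0,1]ⁿ} ⟨∇(f^p), ∇(f^q)⟩ dx = −(pq/(p+q−1)) ∫_{[0,1]ⁿ} f^{p+q−1}·Δf dx, where Δf = Σᵢ ∂²f/∂xᵢ² is the analyst's Laplacian. (This is Proposition 3.1 of the paper, stated for the closed manifold given by the flat torus ℝⁿ/ℤⁿ; with the geometer's Laplacian Δ_geo = −Δ the right-hand side is +(pq/(p+q−1)) ∫ f^{p+q−1}Δ_geo f.) -/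
open MeasureTheory
open scoped RealInnerProductSpace

/-- The analyst's Laplacian on `ℝⁿ`: the sum of the pure second partial derivatives. -/
noncomputable def analystLaplacian {n : ℕ} (g : EuclideanSpace ℝ (Fin n) → ℝ)
    (x : EuclideanSpace ℝ (Fin n)) : ℝ :=
  ∑ i : Fin n,
    fderiv ℝ (fun y => fderiv ℝ g y (EuclideanSpace.single i 1)) x (EuclideanSpace.single i 1)

namespace Stmt3Aux

variable {n : ℕ}

/-- `ℤⁿ`-periodicity for functions on the pi type. -/
def Per (u : (Fin n → ℝ) → ℝ) : Prop :=
  ∀ (x : Fin n → ℝ) (v : Fin n → ℤ), u (x + fun i => (v i : ℝ)) = u x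

lemma Per.fderiv_apply {u : (Fin n → ℝ) → ℝ} (hu : Per u) (hd : Differentiable ℝ u)
    (w : Fin n → ℝ) : Per (fun x => fderiv ℝ u x w) := by
  intro x v
  set c : Fin n → ℝ := fun i => (v i : ℝ) with hc
  have h2 : (fun y : Fin n → ℝ => u (y + c)) = u := funext fun y => hu y v
  have h1 : fderiv ℝ (fun y : Fin n → ℝ => u (y + c)) x = fderiv ℝ u (x + c) := by
    have h := ((hd (x + c)).hasFDerivAt.comp x
      ((hasFDerivAt_id x).add_const c)).fderiv
    simpa [Function.comp_def] using h
  simp only [← h1, h2]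

lemma insertNth_one_eq {m : ℕ} (i : Fin (m + 1)) (x : Fin m → ℝ) :
    i.insertNth (1 : ℝ) x
      = i.insertNth (0 : ℝ) x + fun j => ((Pi.single i 1 : Fin (m + 1) → ℤ) j : ℝ) := by
  funext j
  refine Fin.succAboveCases i ?_ ?_ j
  · simp
  · intro k
    simp [Pi.single_eq_of_ne (Fin.succAbove_ne i k)]

/-- Divergence theorem on the unit cube for a smooth `ℤⁿ`-periodic vector field. -/
lemma divergence_zero (F : (Fin n → ℝ) → (Fin n → ℝ)) (hF : ContDiff ℝ (⊤ : ℕ∞) F)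
    (hper : ∀ (x : Fin n → ℝ) (v : Fin n → ℤ), F (x + fun i => (v i : ℝ)) = F x) :
    ∫ x in Set.Icc (0 : Fin n → ℝ) 1, ∑ i, fderiv ℝ F x (Pi.single i 1) i = 0 := by
  cases n with
  | zero => simp
  | succ m =>
    have hd : Differentiable ℝ F := hF.differentiable (by simp)
    have hdc : Continuous fun x : Fin (m + 1) → ℝ => fderiv ℝ F x :=
      (hF.fderiv_right (m := (⊤ : ℕ∞)) (by simp)).continuous
    have hcont : Continuous fun x : Fin (m + 1) → ℝ =>
        ∑ i, fderiv ℝ F x (Pi.single i 1) i := by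
      refine continuous_finset_sum _ fun i _ => ?_
      exact (continuous_apply i).comp
        ((ContinuousLinearMap.apply ℝ (Fin (m + 1) → ℝ) (Pi.single i 1)).continuous.comp hdc)
    rw [MeasureTheory.integral_divergence_of_hasFDerivAt_off_countable
      (0 : Fin (m + 1) → ℝ) 1 (fun i => by norm_num) F (fun x => fderiv ℝ F x) ∅
      Set.countable_empty hF.continuous.continuousOn
      (fun x hx => (hd x).hasFDerivAt)
      (hcont.integrableOn_Icc)]
    refine Finset.sum_eq_zero fun i _ => sub_eq_zero.2 ?_
    have hfb : ∀ x : Fin m → ℝ,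
        F (i.insertNth ((1 : Fin (m + 1) → ℝ) i) x) i
          = F (i.insertNth ((0 : Fin (m + 1) → ℝ) i) x) i := by
      intro x
      have h1 : i.insertNth ((1 : Fin (m + 1) → ℝ) i) x
          = i.insertNth ((0 : Fin (m + 1) → ℝ) i) x
            + fun j => ((Pi.single i 1 : Fin (m + 1) → ℤ) j : ℝ) := by
        simpa using insertNth_one_eq i x
      rw [h1, hper]
    simp only [hfb]

end Stmt3Aux

namespace Stmt3Aux

lemma contDiff_D {u : (Fin n → ℝ) → ℝ} (hu : ContDiff ℝ (⊤ : ℕ∞) u) (w : Fin n → ℝ) :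
    ContDiff ℝ (⊤ : ℕ∞) fun x => fderiv ℝ u x w :=
  (ContinuousLinearMap.apply ℝ ℝ w).contDiff.comp (hu.fderiv_right (m := (⊤ : ℕ∞)) (by simp))

/-- Integration by parts on the unit cube for smooth periodic functions. -/
lemma parts_pi (g h : (Fin n → ℝ) → ℝ) (hg : ContDiff ℝ (⊤ : ℕ∞) g) (hh : ContDiff ℝ (⊤ : ℕ∞) h)
    (hgp : Per g) (hhp : Per h) :
    ∫ x in Set.Icc (0 : Fin n → ℝ) 1,
        ∑ i, fderiv ℝ g x (Pi.single i 1) * fderiv ℝ h x (Pi.single i 1)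
      = - ∫ x in Set.Icc (0 : Fin n → ℝ) 1,
          g x * ∑ i, fderiv ℝ (fun y => fderiv ℝ h y (Pi.single i 1)) x (Pi.single i 1) := by
  classical
  set Dh : Fin n → (Fin n → ℝ) → ℝ := fun i x => fderiv ℝ h x (Pi.single i 1) with hDh
  have hDhc : ∀ i, ContDiff ℝ (⊤ : ℕ∞) (Dh i) := fun i => contDiff_D hh _
  set F : (Fin n → ℝ) → (Fin n → ℝ) := fun x i => g x * Dh i x with hF
  have hFc : ContDiff ℝ (⊤ : ℕ∞) F := contDiff_pi.2 fun i => hg.mul (hDhc i)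
  have hFper : ∀ (x : Fin n → ℝ) (v : Fin n → ℤ), F (x + fun i => (v i : ℝ)) = F x := by
    intro x v
    funext i
    have h1 := hgp x v
    have h2 := (hhp.fderiv_apply (hh.differentiable (by simp)) (Pi.single i 1)) x v
    simp only [hF, h1]
    exact congrArg _ h2
  have key := divergence_zero F hFc hFper
  -- compute the divergence pointwise
  have hdiv : ∀ x : Fin n → ℝ,
      ∑ i, fderiv ℝ F x (Pi.single i 1) i
        = (∑ i, fderiv ℝ g x (Pi.single i 1) * Dh i x)
          + g x * ∑ i, fderiv ℝ (Dh i) x (Pi.single i 1) := by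
    intro x
    have hFd : fderiv ℝ F x = ContinuousLinearMap.pi
        (fun i => fderiv ℝ (fun y => g y * Dh i y) x) := by
      exact fderiv_pi fun i =>
        ((hg.differentiable (by simp) x).mul ((hDhc i).differentiable (by simp) x))
    have : ∀ i, fderiv ℝ F x (Pi.single i 1) i
        = fderiv ℝ g x (Pi.single i 1) * Dh i x + g x * fderiv ℝ (Dh i) x (Pi.single i 1) := by
      intro i
      rw [hFd]
      simp only [ContinuousLinearMap.pi_apply]
      rw [fderiv_fun_mul (hg.differentiable (by simp) x) ((hDhc i).differentiable (by simp) x)]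
      simp only [ContinuousLinearMap.add_apply, ContinuousLinearMap.smul_apply, smul_eq_mul]
      ring
    rw [Finset.sum_congr rfl fun i _ => this i, Finset.sum_add_distrib, Finset.mul_sum]
  -- rewrite the integrand in key
  have key2 : ∫ x in Set.Icc (0 : Fin n → ℝ) 1,
      ((∑ i, fderiv ℝ g x (Pi.single i 1) * Dh i x)
        + g x * ∑ i, fderiv ℝ (Dh i) x (Pi.single i 1)) = 0 := by
    rw [← key]
    exact setIntegral_congr_fun measurableSet_Icc fun x _ => (hdiv x).symm
  have hInt1 : IntegrableOn
      (fun x => ∑ i, fderiv ℝ g x (Pi.single i 1) * Dh i x)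
      (Set.Icc (0 : Fin n → ℝ) 1) := by
    refine Continuous.integrableOn_Icc ?_
    exact continuous_finset_sum _ fun i _ =>
      ((contDiff_D hg (Pi.single i 1)).continuous).mul ((hDhc i).continuous)
  have hInt2 : IntegrableOn
      (fun x => g x * ∑ i, fderiv ℝ (Dh i) x (Pi.single i 1))
      (Set.Icc (0 : Fin n → ℝ) 1) := by
    refine Continuous.integrableOn_Icc ?_
    exact (hg.continuous).mul (continuous_finset_sum _ fun i _ =>
      (contDiff_D (hDhc i) (Pi.single i 1)).continuous)
  rw [integral_add hInt1 hInt2] at key2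
  linarith [key2]

end Stmt3Aux

namespace Stmt3Aux

/-- The identity map from the pi type to Euclidean space. -/
noncomputable def toES {n : ℕ} : (Fin n → ℝ) → EuclideanSpace ℝ (Fin n) :=
  (WithLp.equiv 2 (Fin n → ℝ)).symm

lemma fderiv_transfer (u : EuclideanSpace ℝ (Fin n) → ℝ) (y : Fin n → ℝ) (i : Fin n) :
    fderiv ℝ (fun z : Fin n → ℝ => u (toES z)) y (Pi.single i 1)
      = fderiv ℝ u (toES y) (EuclideanSpace.single i (1 : ℝ)) := by
  have hco : (fun z : Fin n → ℝ => u (toES z))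
      = u ∘ (EuclideanSpace.equiv (Fin n) ℝ).symm := rfl
  rw [hco, ContinuousLinearEquiv.comp_right_fderiv]
  rfl

lemma laplacian_transfer (u : EuclideanSpace ℝ (Fin n) → ℝ) (y : Fin n → ℝ) :
    analystLaplacian u (toES y)
      = ∑ i, fderiv ℝ
          (fun z : Fin n → ℝ => fderiv ℝ (fun w : Fin n → ℝ => u (toES w)) z (Pi.single i 1))
          y (Pi.single i 1) := by
  unfold analystLaplacian
  refine Finset.sum_congr rfl fun i _ => ?_
  have h1 : (fun z : Fin n → ℝ => fderiv ℝ (fun w : Fin n → ℝ => u (toES w)) z (Pi.single i 1))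
      = fun z : Fin n → ℝ => fderiv ℝ u (toES z) (EuclideanSpace.single i 1) :=
    funext fun z => fderiv_transfer u z i
  rw [h1]
  exact (fderiv_transfer (fun x => fderiv ℝ u x (EuclideanSpace.single i 1)) y i).symm

lemma integral_transfer (G : EuclideanSpace ℝ (Fin n) → ℝ) :
    (∫ x in {x : EuclideanSpace ℝ (Fin n) | ∀ i, x i ∈ Set.Icc (0 : ℝ) 1}, G x)
      = ∫ y in Set.Icc (0 : Fin n → ℝ) 1, G (toES y) := by
  have h := (EuclideanSpace.volume_preserving_symm_measurableEquiv_toLp (Fin n)).setIntegral_preimage_emb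
    (MeasurableEquiv.toLp 2 (Fin n → ℝ)).symm.measurableEmbedding
    (fun y => G (toES y)) (Set.Icc (0 : Fin n → ℝ) 1)
  rw [← h]
  have hs : (MeasurableEquiv.toLp 2 (Fin n → ℝ)).symm ⁻¹' (Set.Icc (0 : Fin n → ℝ) 1)
      = {x : EuclideanSpace ℝ (Fin n) | ∀ i, x i ∈ Set.Icc (0 : ℝ) 1} := by
    ext x
    simp only [Set.mem_preimage, Set.mem_Icc, Set.mem_setOf_eq, Pi.le_def]
    constructor
    · rintro ⟨h0, h1⟩ i; exact ⟨h0 i, h1 i⟩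
    · intro hx; exact ⟨fun i => (hx i).1, fun i => (hx i).2⟩
  rw [hs]
  rfl

lemma inner_grad_eq (u v : EuclideanSpace ℝ (Fin n) → ℝ) (x : EuclideanSpace ℝ (Fin n)) :
    ⟪gradient u x, gradient v x⟫
      = ∑ i, fderiv ℝ u x (EuclideanSpace.single i 1) * fderiv ℝ v x (EuclideanSpace.single i 1) := by
  have key : ∀ (w : EuclideanSpace ℝ (Fin n) → ℝ) (i : Fin n),
      gradient w x i = fderiv ℝ w x (EuclideanSpace.single i 1) := by
    intro w i
    have h : ⟪gradient w x, EuclideanSpace.single i (1 : ℝ)⟫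
        = fderiv ℝ w x (EuclideanSpace.single i 1) := by
      unfold gradient
      exact InnerProductSpace.toDual_symm_apply
    rw [EuclideanSpace.inner_single_right] at h
    simpa using h
  rw [PiLp.inner_apply]
  refine Finset.sum_congr rfl fun i _ => ?_
  rw [key u i, key v i]
  simp [mul_comm]

lemma gradient_pow (u : EuclideanSpace ℝ (Fin n) → ℝ) (hu : Differentiable ℝ u) (k : ℕ)
    (x : EuclideanSpace ℝ (Fin n)) :
    gradient (fun y => u y ^ k) x = ((k : ℝ) * u x ^ (k - 1)) • gradient u x := by
  have h1 : HasDerivAt (fun z : ℝ => z ^ k) ((k : ℝ) * u x ^ (k - 1)) (u x) :=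
    hasDerivAt_pow k (u x)
  have h2 := (h1.comp_hasFDerivAt x (hu x).hasFDerivAt).fderiv
  unfold gradient
  rw [show (fun y => u y ^ k) = (fun z : ℝ => z ^ k) ∘ u from rfl, h2]
  exact (InnerProductSpace.toDual ℝ (EuclideanSpace ℝ (Fin n))).symm.map_smul _ _

end Stmt3Aux

open Stmt3Aux in
/-- Integration by parts on the flat torus `ℝⁿ/ℤⁿ` (Proposition 3.1 of the paper,
analyst's sign convention): for a smooth `ℤⁿ`-periodic `f : ℝⁿ → ℝ` and `p, q ≥ 1`,
`∫_{[0,1]ⁿ} ⟨∇(f^p), ∇(f^q)⟩ = −(pq/(p+q−1)) ∫_{[0,1]ⁿ} f^{p+q−1}·Δf`. -/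
theorem stmt_3 {n : ℕ} (f : EuclideanSpace ℝ (Fin n) → ℝ) (hf : ContDiff ℝ (⊤ : ℕ∞) f)
    (hper : ∀ (x : EuclideanSpace ℝ (Fin n)) (v : Fin n → ℤ),
      f (WithLp.toLp 2 (fun i => x i + (v i : ℝ))) = f x)
    (p q : ℕ) (hp : 1 ≤ p) (hq : 1 ≤ q) (hpq : 2 ≤ p + q) :
    (∫ x in {x : EuclideanSpace ℝ (Fin n) | ∀ i, x i ∈ Set.Icc (0 : ℝ) 1},
        ⟪gradient (fun y => f y ^ p) x, gradient (fun y => f y ^ q) x⟫) =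
      -((p : ℝ) * (q : ℝ) / ((p : ℝ) + (q : ℝ) - 1)) *
        ∫ x in {x : EuclideanSpace ℝ (Fin n) | ∀ i, x i ∈ Set.Icc (0 : ℝ) 1},
          f x ^ (p + q - 1) * analystLaplacian f x := by
  classical
  have hfd : Differentiable ℝ f := hf.differentiable (by simp)
  set r : ℕ := p + q - 1 with hr
  have hrcast : ((r : ℕ) : ℝ) = (p : ℝ) + (q : ℝ) - 1 := by
    rw [hr, Nat.cast_sub (by omega : 1 ≤ p + q)]
    push_cast; ring
  have hne : (0 : ℝ) < (p : ℝ) + (q : ℝ) - 1 := by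
    have h2 : (2 : ℝ) ≤ (p : ℝ) + (q : ℝ) := by exact_mod_cast hpq
    linarith
  -- pointwise identity reducing the two powers to a single integration by parts
  have hpt : ∀ x, ⟪gradient (fun y => f y ^ p) x, gradient (fun y => f y ^ q) x⟫
      = ((p : ℝ) * (q : ℝ) / ((p : ℝ) + (q : ℝ) - 1)) *
          ⟪gradient (fun y => f y ^ r) x, gradient f x⟫ := by
    intro x
    rw [gradient_pow f hfd p x, gradient_pow f hfd q x, gradient_pow f hfd r x]
    rw [real_inner_smul_left, real_inner_smul_right, real_inner_smul_left]
    rw [hrcast]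
    have hpow : f x ^ (r - 1) = f x ^ (p - 1) * f x ^ (q - 1) := by
      rw [← pow_add]
      congr 1
      omega
    rw [hpow]
    field_simp
  -- smoothness and periodicity data in the pi world
  set gP : (Fin n → ℝ) → ℝ := fun y => f (toES y) ^ r with hgP
  set hP : (Fin n → ℝ) → ℝ := fun y => f (toES y) with hhP
  have hhPc : ContDiff ℝ (⊤ : ℕ∞) hP :=
    hf.comp (EuclideanSpace.equiv (Fin n) ℝ).symm.contDiff
  have hgPc : ContDiff ℝ (⊤ : ℕ∞) gP := hhPc.pow r
  have hhPper : Per hP := fun y v => hper (toES y) v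
  have hgPper : Per gP := fun y v => by
    have h := hper (toES y) v
    simp only [hgP]
    exact congrArg (· ^ r) (hhPper y v)
  -- the key integration by parts
  have hkey : (∫ x in {x : EuclideanSpace ℝ (Fin n) | ∀ i, x i ∈ Set.Icc (0 : ℝ) 1},
        ⟪gradient (fun y => f y ^ r) x, gradient f x⟫)
      = - ∫ x in {x : EuclideanSpace ℝ (Fin n) | ∀ i, x i ∈ Set.Icc (0 : ℝ) 1},
          f x ^ r * analystLaplacian f x := by
    rw [integral_transfer, integral_transfer]
    have h1 : ∀ y : Fin n → ℝ,
        ⟪gradient (fun z => f z ^ r) (toES y), gradient f (toES y)⟫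
          = ∑ i, fderiv ℝ gP y (Pi.single i 1) * fderiv ℝ hP y (Pi.single i 1) := by
      intro y
      rw [inner_grad_eq]
      refine Finset.sum_congr rfl fun i _ => ?_
      rw [fderiv_transfer (fun z => f z ^ r) y i, fderiv_transfer f y i]
    have h2 : ∀ y : Fin n → ℝ,
        f (toES y) ^ r * analystLaplacian f (toES y)
          = gP y * ∑ i, fderiv ℝ (fun z => fderiv ℝ hP z (Pi.single i 1)) y (Pi.single i 1) := by
      intro y
      rw [laplacian_transfer]
    simp only [h1, h2]
    exact parts_pi gP hP hgPc hhPc hgPper hhPper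
  calc (∫ x in {x : EuclideanSpace ℝ (Fin n) | ∀ i, x i ∈ Set.Icc (0 : ℝ) 1},
        ⟪gradient (fun y => f y ^ p) x, gradient (fun y => f y ^ q) x⟫)
      = ((p : ℝ) * (q : ℝ) / ((p : ℝ) + (q : ℝ) - 1)) *
          ∫ x in {x : EuclideanSpace ℝ (Fin n) | ∀ i, x i ∈ Set.Icc (0 : ℝ) 1},
            ⟪gradient (fun y => f y ^ r) x, gradient f x⟫ := by
        simp only [hpt]
        exact MeasureTheory.integral_const_mul _ _
    _ = -((p : ℝ) * (q : ℝ) / ((p : ℝ) + (q : ℝ) - 1)) *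
          ∫ x in {x : EuclideanSpace ℝ (Fin n) | ∀ i, x i ∈ Set.Icc (0 : ℝ) 1},
            f x ^ r * analystLaplacian f x := by
        rw [hkey]; ring
end

section
/- Let H ⊂ ℝ² be the closed hexagon with vertices (1,0), (0,1), (−1,1), (−1,0), (0,−1), (1,−1), and let x̃₁ = √(6/5)·x₁, x̃₂ = √(8/5)·(x₂ + x₁/2). For every (a,b) ∈ ℝ² with (a,b) ≠ (0,0), setting φ = a·x̃₁ + b·x̃₂ and Φ = φ² − (1/3)(a²+b²), the quantity Q(a,b) := ( (∫_H x̃₁φ² dx)² + (∫_H x̃₂φ² dx)² + 4(∫_H φ² dx)²/Area(H) ) / ∫_H Φ² dx equals 500/127. Consequently the upper bound 8/3 + (2/3)·inf Q of Theorem 1.1 equals 672/127 for ℂP²♯3(ℂP²-bar). -/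
/-! Write `ℓ = α x + β y` for a linear form and `q = α² - αβ + β²` for the quadratic form
preserved by the symmetries of the hexagon. Fubini over the halves `x ≤ 0` and `x > 0` of the
hexagon gives the even moments `∫ 1 = 3`, `∫ ℓ² = (5/6) q` and `∫ ℓ⁴ = (7/15) q²`, while the odd
moments vanish by central symmetry. For `φ = a x̃₁ + b x̃₂` one has `q = (6/5)(a² + b²)`, so with
`s = a² + b²` the numerator of `Q` is `4 s² / 3` and `∫ Φ² = ∫ φ⁴ - s² / 3 = (127/375) s²`. -/

open Set MeasureTheory Pointwise

theorem setIntegral_eq_zero_of_odd {G E : Type*} [MeasurableSpace G] [InvolutiveNeg G]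
    [MeasurableNeg G] [NormedAddCommGroup E] [NormedSpace ℝ E] (μ : Measure G) [μ.IsNegInvariant]
    {s : Set G} (hs : -s = s) {f : G → E} (hf : ∀ x, f (-x) = -f x) :
    ∫ x in s, f x ∂μ = 0 := by
  have h := (μ.measurePreserving_neg).setIntegral_preimage_emb measurableEmbedding_neg f s
  simp only [Set.neg_preimage, hs, hf, integral_neg] at h
  have h2 : (2 : ℝ) • ∫ x in s, f x ∂μ = 0 := by
    rw [two_smul]
    nth_rw 1 [← h]
    exact neg_add_cancel _
  exact (smul_eq_zero.mp h2).resolve_left two_ne_zero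

theorem setIntegral_region_between_cc_eq {α E : Type*} [MeasurableSpace α]
    [NormedAddCommGroup E] [NormedSpace ℝ E] {μ : Measure α} [SFinite μ] {s : Set α}
    (hs : MeasurableSet s) {g h : α → ℝ} (hg : Measurable g) (hh : Measurable h)
    (hgh : ∀ x ∈ s, g x ≤ h x) {f : α × ℝ → E}
    (hf : IntegrableOn f {p | p.1 ∈ s ∧ p.2 ∈ Icc (g p.1) (h p.1)} (μ.prod volume)) :
    ∫ p in {p | p.1 ∈ s ∧ p.2 ∈ Icc (g p.1) (h p.1)}, f p ∂(μ.prod volume) =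
      ∫ x in s, (∫ y in g x..h x, f (x, y)) ∂μ := by
  have hR := measurableSet_region_between_cc hg hh hs
  rw [← integral_indicator hR, integral_prod _ (hf.integrable_indicator hR),
    ← integral_indicator hs]
  congr 1 with x
  by_cases hx : x ∈ s
  · rw [indicator_of_mem hx, intervalIntegral.integral_of_le (hgh x hx),
      ← integral_Icc_eq_integral_Ioc, ← integral_indicator measurableSet_Icc]
    congr 1 with y
    simp [indicator, hx]
  · simp [hx]

def hexagon : Set (ℝ × ℝ) := {p | |p.1| ≤ 1 ∧ |p.2| ≤ 1 ∧ |p.1 + p.2| ≤ 1}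

def hexagonForm (α β : ℝ) : ℝ := α ^ 2 - α * β + β ^ 2

theorem neg_hexagon : -hexagon = hexagon := by
  ext p
  simp only [hexagon, mem_neg, mem_ofPred_eq, Prod.fst_neg, Prod.snd_neg, ← neg_add, abs_neg]

theorem isCompact_hexagon : IsCompact hexagon := by
  refine Metric.isCompact_of_isClosed_isBounded ?_ ?_
  · exact (isClosed_le (continuous_abs.comp continuous_fst) continuous_const).inter
      ((isClosed_le (continuous_abs.comp continuous_snd) continuous_const).inter
        (isClosed_le (continuous_abs.comp (continuous_fst.add continuous_snd)) continuous_const))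
  · refine (Metric.isBounded_Icc ((-1, -1) : ℝ × ℝ) (1, 1)).subset ?_
    rintro p ⟨h1, h2, -⟩
    rw [abs_le] at h1 h2
    exact ⟨⟨h1.1, h2.1⟩, ⟨h1.2, h2.2⟩⟩

theorem hexagon_eq_union :
    hexagon = {p | p.1 ∈ Icc (-1) 0 ∧ p.2 ∈ Icc (-1 - p.1) 1} ∪
      {p | p.1 ∈ Ioc 0 1 ∧ p.2 ∈ Icc (-1) (1 - p.1)} := by
  ext p
  simp only [hexagon, mem_union, mem_ofPred_eq, mem_Icc, mem_Ioc, abs_le]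
  rcases le_or_gt p.1 0 with h | h
  · constructor
    · rintro ⟨⟨h1, -⟩, ⟨-, h2⟩, h3, -⟩
      exact Or.inl ⟨⟨h1, h⟩, by linarith, h2⟩
    · rintro (⟨⟨h1, -⟩, h2, h3⟩ | ⟨⟨h1, -⟩, -⟩)
      · exact ⟨⟨h1, by linarith⟩, ⟨by linarith, h3⟩, by linarith, by linarith⟩
      · linarith
  · constructor
    · rintro ⟨⟨-, h1⟩, ⟨h2, -⟩, -, h3⟩
      exact Or.inr ⟨⟨h, h1⟩, h2, by linarith⟩
    · rintro (⟨⟨-, h1⟩, -⟩ | ⟨⟨-, h1⟩, h2, h3⟩)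
      · linarith
      · exact ⟨⟨by linarith, h1⟩, ⟨h2, by linarith⟩, by linarith, by linarith⟩

theorem integral_hexagon_eq {f : ℝ × ℝ → ℝ} (hf : Continuous f) :
    ∫ p in hexagon, f p =
      (∫ x in (-1 : ℝ)..0, ∫ y in (-1 - x)..1, f (x, y)) +
        ∫ x in (0 : ℝ)..1, ∫ y in (-1 : ℝ)..(1 - x), f (x, y) := by
  have hint : IntegrableOn f hexagon := hf.continuousOn.integrableOn_compact isCompact_hexagon
  rw [hexagon_eq_union] at hint ⊢
  have hdisj : Disjoint {p : ℝ × ℝ | p.1 ∈ Icc (-1) 0 ∧ p.2 ∈ Icc (-1 - p.1) 1}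
      {p | p.1 ∈ Ioc 0 1 ∧ p.2 ∈ Icc (-1) (1 - p.1)} :=
    disjoint_left.mpr fun p hl hr => not_lt.mpr hl.1.2 hr.1.1
  rw [setIntegral_union hdisj
      (measurableSet_region_between_cc (f := fun _ => -1) (g := fun x => 1 - x)
        (by fun_prop) (by fun_prop) measurableSet_Ioc)
      (hint.mono_set subset_union_left) (hint.mono_set subset_union_right),
    Measure.volume_eq_prod,
    setIntegral_region_between_cc_eq (g := fun x => -1 - x) (h := fun _ => 1) measurableSet_Icc
      (by fun_prop) (by fun_prop)
      (fun x hx => by linarith [hx.1]) (hint.mono_set subset_union_left),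
    setIntegral_region_between_cc_eq (g := fun _ => -1) (h := fun x => 1 - x) measurableSet_Ioc
      (by fun_prop) (by fun_prop)
      (fun x hx => by linarith [hx.2]) (hint.mono_set subset_union_right),
    integral_Icc_eq_integral_Ioc, ← intervalIntegral.integral_of_le (by norm_num),
    ← intervalIntegral.integral_of_le (by norm_num)]

theorem integral_hexagon_even_quartic_linear (α β c₀ c₂ c₄ : ℝ) :
    ∫ p in hexagon, (c₀ + c₂ * (α * p.1 + β * p.2) ^ 2 + c₄ * (α * p.1 + β * p.2) ^ 4) =
      3 * c₀ + 5 / 6 * c₂ * hexagonForm α β + 7 / 15 * c₄ * hexagonForm α β ^ 2 := by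
  rw [integral_hexagon_eq (by fun_prop), hexagonForm]
  -- `simp` does not solve the higher-order pattern `?g x =?= x`, hence the instances at the identity
  iterate 2
    ring_nf
    simp (disch := apply Continuous.intervalIntegrable; fun_prop) only
      [intervalIntegral.integral_add, intervalIntegral.integral_sub, intervalIntegral.integral_neg,
        intervalIntegral.integral_const_mul, intervalIntegral.integral_mul_const,
        intervalIntegral.integral_add (g := fun x => x), intervalIntegral.integral_sub (g := fun x => x),
        intervalIntegral.integral_const_mul (f := fun x => x),
        integral_pow, integral_id, intervalIntegral.integral_const, smul_eq_mul]
  ring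

theorem volume_hexagon : (volume hexagon).toReal = 3 := by
  simpa [Measure.real] using integral_hexagon_even_quartic_linear 0 0 1 0 0

theorem integral_hexagon_linear_sq (α β : ℝ) :
    ∫ p in hexagon, (α * p.1 + β * p.2) ^ 2 = 5 / 6 * hexagonForm α β := by
  simpa using integral_hexagon_even_quartic_linear α β 0 1 0

theorem integral_hexagon_linear_sq_sub_sq (α β k : ℝ) :
    ∫ p in hexagon, ((α * p.1 + β * p.2) ^ 2 - k) ^ 2 =
      7 / 15 * hexagonForm α β ^ 2 - 5 / 3 * k * hexagonForm α β + 3 * k ^ 2 := by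
  convert integral_hexagon_even_quartic_linear α β (k ^ 2) (-2 * k) 1 using 1
  · congr 1 with p
    ring
  · ring

theorem orthonormal_coords_combination_eq (a b : ℝ) (p : ℝ × ℝ) :
    a * (√(6 / 5) * p.1) + b * (√(8 / 5) * (p.2 + p.1 / 2)) =
      (√(6 / 5) * a + √(8 / 5) / 2 * b) * p.1 + √(8 / 5) * b * p.2 := by
  ring

theorem hexagonForm_orthonormal_coords (a b : ℝ) :
    hexagonForm (√(6 / 5) * a + √(8 / 5) / 2 * b) (√(8 / 5) * b) = 6 / 5 * (a ^ 2 + b ^ 2) := by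
  rw [hexagonForm]
  linear_combination a ^ 2 * Real.sq_sqrt (show (0 : ℝ) ≤ 6 / 5 by norm_num) +
    3 / 4 * b ^ 2 * Real.sq_sqrt (show (0 : ℝ) ≤ 8 / 5 by norm_num)

/-- The `ℂP²♯3(ℂP²-bar)` example with `Λ = 1`: the quantity `Q(a,b)` of Theorem 1.1
equals `500/127` for every `(a,b) ≠ (0,0)`, so the upper bound `8/3 + (2/3)·inf Q`
equals `672/127`. -/
theorem stmt_14 (H : Set (ℝ × ℝ))
    (hH : H = {p : ℝ × ℝ | |p.1| ≤ 1 ∧ |p.2| ≤ 1 ∧ |p.1 + p.2| ≤ 1})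
    (x1 x2 : ℝ × ℝ → ℝ)
    (hx1 : x1 = fun p => Real.sqrt (6 / 5) * p.1)
    (hx2 : x2 = fun p => Real.sqrt (8 / 5) * (p.2 + p.1 / 2))
    (Q : ℝ → ℝ → ℝ)
    (hQ : ∀ a b : ℝ, Q a b =
      ((∫ p in H, x1 p * (a * x1 p + b * x2 p) ^ 2) ^ 2 +
         (∫ p in H, x2 p * (a * x1 p + b * x2 p) ^ 2) ^ 2 +
         4 * (∫ p in H, (a * x1 p + b * x2 p) ^ 2) ^ 2 / (volume H).toReal) /
        ∫ p in H, ((a * x1 p + b * x2 p) ^ 2 - 1 / 3 * (a ^ 2 + b ^ 2)) ^ 2) :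
    (∀ a b : ℝ, ¬(a = 0 ∧ b = 0) → Q a b = 500 / 127) ∧
    8 / 3 + 2 / 3 * (⨅ p : {p : ℝ × ℝ // p ≠ 0}, Q p.1.1 p.1.2) = (672 : ℝ) / 127 := by
  obtain rfl : H = hexagon := hH
  subst hx1 hx2
  have hQ_eq : ∀ a b : ℝ, ¬(a = 0 ∧ b = 0) → Q a b = 500 / 127 := by
    intro a b hab
    have hs : a ^ 2 + b ^ 2 ≠ 0 := by rwa [sq, sq, Ne, mul_self_add_mul_self_eq_zero]
    rw [hQ]
    simp only [orthonormal_coords_combination_eq a b]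
    rw [setIntegral_eq_zero_of_odd volume neg_hexagon fun p => by
        simp only [Prod.fst_neg, Prod.snd_neg]; ring,
      setIntegral_eq_zero_of_odd volume neg_hexagon fun p => by
        simp only [Prod.fst_neg, Prod.snd_neg]; ring,
      integral_hexagon_linear_sq, integral_hexagon_linear_sq_sub_sq, volume_hexagon,
      hexagonForm_orthonormal_coords]
    field_simp
    ring
  refine ⟨hQ_eq, ?_⟩
  have : Nonempty {p : ℝ × ℝ // p ≠ 0} := ⟨⟨(1, 0), by simp⟩⟩
  rw [iInf_congr fun p : {p : ℝ × ℝ // p ≠ 0} =>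
    hQ_eq p.1.1 p.1.2 fun h => p.2 (Prod.ext h.1 h.2), ciInf_const]
  norm_num
end
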